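/- arXiv:1910.03350 — 4 statements merged into one kernel-verified Lean document; each statement's English description precedes it below -/
import Mathlib

section
/- The function F(α) = (2κ+λ)(cosh α −1) + sqrt(γ² + λ² sinh² α) − γ is convex on ℝ. -/
/-!
`cosh` is convex, and `√(γ² + λ² sinh² α) = √(γ² + (λ sinh |α|)²)` is the composition of the
convex function `t ↦ √(γ² + t²) = ‖γ + t i‖`, which is monotone on `[0, ∞)`, with the
nonnegative convex function `α ↦ λ sinh |α|`.
-/

open Real Set

lemma convexOn_univ_cosh : ConvexOn ℝ univ cosh := by
  refine convexOn_univ_of_deriv2_nonneg differentiable_cosh (by simp) fun x => ?_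
  simp [(cosh_pos x).le]

lemma convexOn_sinh_Ici : ConvexOn ℝ (Ici 0) sinh := by
  refine convexOn_of_deriv2_nonneg (convex_Ici 0) continuous_sinh.continuousOn
    differentiable_sinh.differentiableOn
    (by simpa using differentiable_cosh.differentiableOn) fun x hx => ?_
  rw [interior_Ici] at hx
  simpa using sinh_nonneg_iff.mpr hx.le

lemma ConvexOn.comp_of_mapsTo {𝕜 E α β : Type*} [Semiring 𝕜] [PartialOrder 𝕜]
    [AddCommMonoid E] [AddCommMonoid α] [PartialOrder α] [AddCommMonoid β] [PartialOrder β]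
    [SMul 𝕜 E] [SMul 𝕜 α] [SMul 𝕜 β] {s : Set E} {t : Set β} {f : E → β} {g : β → α}
    (hg : ConvexOn 𝕜 t g) (hf : ConvexOn 𝕜 s f) (hg_mono : MonotoneOn g t) (hst : MapsTo f s t) :
    ConvexOn 𝕜 s (g ∘ f) :=
  ⟨hf.1, fun _ hx _ hy _ _ ha hb hab =>
    (hg_mono (hst <| hf.1 hx hy ha hb hab) (hg.1 (hst hx) (hst hy) ha hb hab)
      (hf.2 hx hy ha hb hab)).trans (hg.2 (hst hx) (hst hy) ha hb hab)⟩

lemma ConvexOn.comp_abs {f : ℝ → ℝ} (hf : ConvexOn ℝ (Ici 0) f) (hf_mono : MonotoneOn f (Ici 0)) :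
    ConvexOn ℝ univ (fun x => f |x|) :=
  hf.comp_of_mapsTo (convexOn_univ_norm (E := ℝ)) hf_mono fun x _ => abs_nonneg x

lemma convexOn_univ_sqrt_sq_add_sq (c : ℝ) : ConvexOn ℝ univ (fun t : ℝ => √(c ^ 2 + t ^ 2)) := by
  have hdist : (fun t : ℝ => √(c ^ 2 + t ^ 2))
      = (dist · (-c : ℂ)) ∘ LinearMap.toSpanSingleton ℝ ℂ Complex.I := by
    ext t
    simp only [Function.comp_apply, LinearMap.toSpanSingleton_apply, dist_eq_norm, sub_neg_eq_add,
      Complex.real_smul]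
    rw [add_comm (_ * Complex.I), Complex.norm_add_mul_I]
  rw [hdist]
  exact (convexOn_dist _ convex_univ).comp_linearMap _

lemma monotoneOn_sqrt_sq_add_sq (c : ℝ) : MonotoneOn (fun t : ℝ => √(c ^ 2 + t ^ 2)) (Ici 0) :=
  fun s hs t _ hst => sqrt_le_sqrt (by gcongr)

theorem free_energy_convex_general (κ lam γ : ℝ) (hκ : 0 ≤ κ) (hlam : 0 ≤ lam) :
    ConvexOn ℝ Set.univ (fun α : ℝ => (2*κ + lam) * (Real.cosh α - 1)
        + Real.sqrt (γ^2 + lam^2 * (Real.sinh α)^2) - γ) := by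
  have hcosh : ConvexOn ℝ univ (fun α => (2 * κ + lam) * (cosh α - 1)) := by
    simpa [sub_eq_add_neg] using (convexOn_univ_cosh.add_const (-1)).smul (by positivity)
  have hsinh : ConvexOn ℝ univ (fun α => lam * sinh |α|) := by
    simpa using (convexOn_sinh_Ici.comp_abs (sinh_strictMono.monotone.monotoneOn _)).smul hlam
  have hsqrt : ConvexOn ℝ univ (fun α => √(γ ^ 2 + lam ^ 2 * sinh α ^ 2)) := by
    have := ((convexOn_univ_sqrt_sq_add_sq γ).subset (subset_univ _) (convex_Ici 0)).comp_of_mapsTo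
      hsinh (monotoneOn_sqrt_sq_add_sq γ)
      fun α _ => mul_nonneg hlam (sinh_nonneg_iff.mpr (abs_nonneg α))
    simpa [Function.comp_def, mul_pow, ← abs_sinh] using this
  exact (hcosh.add hsqrt).add_const (-γ)

/-- The large deviation free energy `F(α) = (2κ+λ)(cosh α −1) + sqrt(γ² + λ² sinh² α) − γ`
is convex on ℝ. -/
theorem free_energy_convex (κ lam γ : ℝ) (hκ : 0 ≤ κ) (hlam : 0 ≤ lam) (hγ : 0 ≤ γ) :
    ConvexOn ℝ Set.univ (fun α : ℝ => (2*κ + lam) * (Real.cosh α - 1)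
        + Real.sqrt (γ^2 + lam^2 * (Real.sinh α)^2) - γ) :=
  free_energy_convex_general κ lam γ hκ hlam
end

section
/- With the rescaling λ → ελ, γ → ε²γ and position rescaled by ε, the rescaled lattice free energy converges: lim_{ε→0} ε^{-2} [ (2κ+ελ)(cosh(εα)−1) + sqrt(ε⁴γ² + ε²λ² sinh²(εα)) − ε²γ ] = κα² + sqrt(γ² + λ²α²) − γ. -/
/-!
After dividing by `ε²`, the half-angle formula `cosh x - 1 = 2 sinh² (x / 2)` and pulling `ε²`
out of the square root write the rescaled free energy as
`(2κ + ελ) · 2 (sinh (εα/2) / ε)² + √(γ² + λ² (sinh (εα) / ε)²) - γ`,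
and every term converges because `sinh (εc) / ε → c`, the derivative of `sinh (· c)` at `0`.
-/

open Real Filter Topology

theorem tendsto_sinh_mul_div_nhdsNE (c : ℝ) :
    Tendsto (fun ε : ℝ => sinh (ε * c) / ε) (𝓝[≠] 0) (𝓝 c) := by
  have hderiv : HasDerivAt (fun x : ℝ => sinh (x * c)) c 0 := by
    simpa [Function.comp_def] using
      (hasDerivAt_sinh (0 * c)).comp 0 ((hasDerivAt_id (0 : ℝ)).mul_const c)
  refine hderiv.tendsto_slope_zero.congr fun ε => ?_
  simp [div_eq_inv_mul]

theorem cosh_sub_one_eq_two_mul_sinh_half_sq (x : ℝ) : cosh x - 1 = 2 * sinh (x / 2) ^ 2 := by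
  rw [show x = 2 * (x / 2) by ring, cosh_two_mul, cosh_sq, mul_div_cancel_left₀ _ two_ne_zero]
  ring

theorem sqrt_pow_four_mul_add (ε a b : ℝ) (hε : ε ≠ 0) :
    √(ε ^ 4 * a + ε ^ 2 * b ^ 2) = ε ^ 2 * √(a + (b / ε) ^ 2) := by
  rw [show ε ^ 4 * a + ε ^ 2 * b ^ 2 = (ε ^ 2) ^ 2 * (a + (b / ε) ^ 2) by field_simp,
    sqrt_mul (sq_nonneg _), sqrt_sq (sq_nonneg ε)]

theorem rescaled_free_energy_eq (κ lam γ α ε : ℝ) (hε : ε ≠ 0) :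
    ε⁻¹ * ε⁻¹ * ((2 * κ + ε * lam) * (cosh (ε * α) - 1)
        + √(ε ^ 4 * γ ^ 2 + ε ^ 2 * lam ^ 2 * sinh (ε * α) ^ 2) - ε ^ 2 * γ)
      = (2 * κ + ε * lam) * (2 * (sinh (ε * (α / 2)) / ε) ^ 2)
        + √(γ ^ 2 + lam ^ 2 * (sinh (ε * α) / ε) ^ 2) - γ := by
  rw [cosh_sub_one_eq_two_mul_sinh_half_sq, mul_assoc (ε ^ 2), ← mul_pow,
    sqrt_pow_four_mul_add ε _ _ hε, mul_div_assoc lam, mul_pow lam, mul_div_assoc ε α]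
  field_simp

theorem free_energy_continuum_limit_general (κ lam γ α : ℝ) :
    Filter.Tendsto
      (fun ε : ℝ => ε⁻¹ * ε⁻¹ * ((2*κ + ε*lam) * (Real.cosh (ε*α) - 1)
        + Real.sqrt (ε^4 * γ^2 + ε^2 * lam^2 * (Real.sinh (ε*α))^2) - ε^2 * γ))
      (nhdsWithin 0 (Set.Ioi 0))
      (nhds (κ * α^2 + Real.sqrt (γ^2 + lam^2 * α^2) - γ)) := by
  have hpunct : 𝓝[>] (0 : ℝ) ≤ 𝓝[≠] 0 := nhdsWithin_mono _ fun _ h => ne_of_gt h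
  have hsinh (c : ℝ) := (tendsto_sinh_mul_div_nhdsNE c).mono_left hpunct
  have hε : Tendsto (fun ε : ℝ => ε) (𝓝[>] 0) (𝓝 0) := tendsto_nhdsWithin_of_tendsto_nhds tendsto_id
  have hcosh_part := ((tendsto_const_nhds (x := 2 * κ)).add (hε.mul_const lam)).mul
    (((hsinh (α / 2)).pow 2).const_mul 2)
  have hsqrt_part := (continuous_sqrt.tendsto _).comp
    ((tendsto_const_nhds (x := γ ^ 2)).add (((hsinh α).pow 2).const_mul (lam ^ 2)))
  convert (hcosh_part.add hsqrt_part).sub_const γ |>.congr' ?_ using 2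
  · ring
  · filter_upwards [self_mem_nhdsWithin] with ε hpos
    exact (rescaled_free_energy_eq κ lam γ α ε (ne_of_gt hpos)).symm

/-- Continuum limit of the lattice free energy: with `λ → ελ`, `γ → ε²γ` and position
rescaled by `ε`, `ε⁻² F_{ελ,κ,ε²γ}(εα) → κα² + sqrt(γ² + λ²α²) − γ` as `ε → 0⁺`. -/
theorem free_energy_continuum_limit (κ lam γ α : ℝ) (hκ : 0 < κ) (hlam : 0 < lam)
    (hγ : 0 < γ) :
    Filter.Tendsto
      (fun ε : ℝ => ε⁻¹ * ε⁻¹ * ((2*κ + ε*lam) * (Real.cosh (ε*α) - 1)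
        + Real.sqrt (ε^4 * γ^2 + ε^2 * lam^2 * (Real.sinh (ε*α))^2) - ε^2 * γ))
      (nhdsWithin 0 (Set.Ioi 0))
      (nhds (κ * α^2 + Real.sqrt (γ^2 + lam^2 * α^2) - γ)) :=
  free_energy_continuum_limit_general κ lam γ α
end

section
/- With S(q,z) = (2γ + z − (λ+2κ)(cos q −1)) / ((γ + z − (λ+2κ)(cos q −1))² − γ² + λ² sin² q), for every q ∈ ℝ and z > 0 one has lim_{ε→0} ε² S(εq, ε²z) = 1/(z + (q²/2)σ²) where σ² = 2κ + λ + λ²/γ. -/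
open Real Filter

private lemma sinc_lim (c : ℝ) :
    Tendsto (fun ε : ℝ => Real.sin (ε * c) / ε) (nhdsWithin 0 {(0:ℝ)}ᶜ) (nhds c) := by
  rcases eq_or_ne c 0 with rfl | hc
  · simp only [mul_zero, Real.sin_zero, zero_div]
    exact tendsto_const_nhds
  · have hslope : Tendsto (fun y : ℝ => Real.sin y / y) (nhdsWithin 0 {(0:ℝ)}ᶜ) (nhds 1) := by
      have h := (hasDerivAt_iff_tendsto_slope).1 (Real.hasDerivAt_sin 0)
      simp only [Real.cos_zero] at h
      refine h.congr' ?_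
      filter_upwards [self_mem_nhdsWithin] with y hy
      simp [slope_def_field]
    have hmap : Tendsto (fun ε : ℝ => ε * c) (nhdsWithin 0 {(0:ℝ)}ᶜ)
        (nhdsWithin 0 {(0:ℝ)}ᶜ) := by
      refine tendsto_nhdsWithin_of_tendsto_nhds_of_eventually_within _ ?_ ?_
      · have h0 : Tendsto (fun ε : ℝ => ε * c) (nhds 0) (nhds (0 * c)) :=
          tendsto_id.mul_const c
        rw [zero_mul] at h0
        exact h0.mono_left nhdsWithin_le_nhds
      · filter_upwards [self_mem_nhdsWithin] with ε hε
        exact Set.mem_compl_singleton_iff.2 (mul_ne_zero hε hc)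
    have h1 : Tendsto (fun ε : ℝ => c * (Real.sin (ε * c) / (ε * c)))
        (nhdsWithin 0 {(0:ℝ)}ᶜ) (nhds (c * 1)) :=
      Tendsto.const_mul c (hslope.comp hmap)
    rw [mul_one] at h1
    refine h1.congr' ?_
    filter_upwards [self_mem_nhdsWithin] with ε hε
    have hε' : ε ≠ 0 := hε
    field_simp

private lemma cos_lim (q : ℝ) :
    Tendsto (fun ε : ℝ => (1 - Real.cos (ε * q)) / ε ^ 2) (nhdsWithin 0 {(0:ℝ)}ᶜ)
      (nhds (q ^ 2 / 2)) := by
  have h := ((sinc_lim (q / 2)).mul (sinc_lim (q / 2))).const_mul 2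
  have hval : 2 * (q / 2 * (q / 2)) = q ^ 2 / 2 := by ring
  rw [hval] at h
  refine h.congr ?_
  intro ε
  have hcos : Real.cos (ε * q) = 1 - 2 * Real.sin (ε * (q / 2)) ^ 2 := by
    have h2 : ε * q = 2 * (ε * (q / 2)) := by ring
    rw [h2, Real.cos_two_mul, Real.cos_sq']
    ring
  rw [hcos]
  ring

/-- Diffusive scaling limit of the lattice Fourier–Laplace transform:
`ε² S(εq, ε²z) → 1/(z + q²σ²/2)` with `σ² = 2κ + λ + λ²/γ`. -/
theorem diffusive_scaling_lattice (κ lam γ : ℝ) (hκ : 0 ≤ κ) (hlam : 0 ≤ lam)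
    (hγ : 0 < γ) (q z : ℝ) (hz : 0 < z) :
    Filter.Tendsto
      (fun ε : ℝ => ε^2 *
        ((2*γ + ε^2*z - (lam + 2*κ) * (Real.cos (ε*q) - 1)) /
          ((γ + ε^2*z - (lam + 2*κ) * (Real.cos (ε*q) - 1))^2 - γ^2
            + lam^2 * (Real.sin (ε*q))^2)))
      (nhdsWithin 0 (Set.Ioi 0))
      (nhds (1 / (z + q^2/2 * (2*κ + lam + lam^2/γ)))) := by
  set Bz : ℝ := z + (lam + 2*κ) * (q^2/2) with hBz
  set Dz : ℝ := 0 * Bz ^ 2 + 2 * γ * Bz + lam ^ 2 * q ^ 2 with hDz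
  have hBzpos : 0 < Bz := by
    rw [hBz]; positivity
  have hDzpos : 0 < Dz := by
    rw [hDz]; positivity
  -- the auxiliary functions
  set B : ℝ → ℝ := fun ε => z + (lam + 2*κ) * ((1 - Real.cos (ε*q)) / ε^2) with hB
  set G : ℝ → ℝ := fun ε =>
    ε^2 * (B ε)^2 + 2*γ * (B ε) + lam^2 * (Real.sin (ε*q) / ε)^2 with hG
  have hBtend : Tendsto B (nhdsWithin 0 {(0:ℝ)}ᶜ) (nhds Bz) :=
    (tendsto_const_nhds.add ((cos_lim q).const_mul (lam + 2*κ)))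
  have hsq : Tendsto (fun ε : ℝ => ε ^ 2) (nhdsWithin 0 {(0:ℝ)}ᶜ) (nhds 0) := by
    have : Tendsto (fun ε : ℝ => ε ^ 2) (nhds 0) (nhds (0 ^ 2)) :=
      (continuous_pow 2).tendsto 0
    simpa using this.mono_left nhdsWithin_le_nhds
  have hGtend : Tendsto G (nhdsWithin 0 {(0:ℝ)}ᶜ) (nhds Dz) := by
    rw [hDz]
    exact ((hsq.mul (hBtend.pow 2)).add ((hBtend.const_mul (2*γ)))).add
      (((sinc_lim q).pow 2).const_mul (lam^2))
  have hNtend : Tendsto (fun ε : ℝ => 2*γ + ε^2*z - (lam + 2*κ) * (Real.cos (ε*q) - 1))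
      (nhdsWithin 0 {(0:ℝ)}ᶜ) (nhds (2*γ)) := by
    have hc : Continuous fun ε : ℝ => 2*γ + ε^2*z - (lam + 2*κ) * (Real.cos (ε*q) - 1) := by
      fun_prop
    have := hc.tendsto 0
    norm_num at this
    exact this.mono_left nhdsWithin_le_nhds
  have hmain : Tendsto
      (fun ε : ℝ => (2*γ + ε^2*z - (lam + 2*κ) * (Real.cos (ε*q) - 1)) / G ε)
      (nhdsWithin 0 {(0:ℝ)}ᶜ) (nhds (2*γ / Dz)) :=
    hNtend.div hGtend hDzpos.ne'
  have hval : 2*γ / Dz = 1 / (z + q^2/2 * (2*κ + lam + lam^2/γ)) := by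
    have hden : 0 < z + q^2/2 * (2*κ + lam + lam^2/γ) := by
      have : 0 ≤ q^2/2 * (2*κ + lam + lam^2/γ) := by positivity
      linarith
    rw [div_eq_div_iff hDzpos.ne' hden.ne']
    field_simp [hDz, hBz]
    ring
  rw [← hval]
  have hfinal := hmain.mono_left
    (nhdsWithin_mono 0 (fun x (hx : x ∈ Set.Ioi 0) => ne_of_gt hx))
  refine hfinal.congr' ?_
  filter_upwards [self_mem_nhdsWithin] with ε hε
  have hε' : (ε:ℝ) ≠ 0 := ne_of_gt hε
  have hGeq : G ε = ((γ + ε^2*z - (lam + 2*κ) * (Real.cos (ε*q) - 1))^2 - γ^2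
      + lam^2 * (Real.sin (ε*q))^2) / ε^2 := by
    simp only [hG, hB]
    field_simp
    ring
  rw [hGeq, div_div_eq_mul_div]
  ring
end

section
/- With 𝒮(q,z) = (2γ + z + κq²)/((z + κq² + γ)² + λ²q² − γ²), one has lim_{ε→0} ε² 𝒮(εq, ε²z) = 1/(z + (q²/2)(2κ + λ²/γ)) for all q ∈ ℝ, z > 0. -/
open Real Filter

/-- Diffusive scaling limit of the telegrapher's process Fourier–Laplace transform:
`ε² 𝒮(εq, ε²z) → 1/(z + (q²/2)(2κ + λ²/γ))`. -/
theorem diffusive_scaling_telegrapher (κ lam γ : ℝ) (hκ : 0 ≤ κ) (hlam : 0 ≤ lam)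
    (hγ : 0 < γ) (q z : ℝ) (hz : 0 < z) :
    Filter.Tendsto
      (fun ε : ℝ => ε^2 *
        ((2*γ + ε^2*z + κ*(ε*q)^2) /
          ((ε^2*z + κ*(ε*q)^2 + γ)^2 + lam^2*(ε*q)^2 - γ^2)))
      (nhdsWithin 0 (Set.Ioi 0))
      (nhds (1 / (z + q^2/2 * (2*κ + lam^2/γ)))) := by
  set A : ℝ := z + κ*q^2 with hA
  have hApos : 0 < A := by positivity
  have hD0 : 0 < 2*γ*A + lam^2*q^2 := by positivity
  have hval : (2*γ + (0:ℝ)^2*A) / (2*γ*A + (0:ℝ)^2*A^2 + lam^2*q^2)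
      = 1 / (z + q^2/2 * (2*κ + lam^2/γ)) := by
    rw [hA]
    field_simp
    ring
  have hcont : Filter.Tendsto
      (fun ε : ℝ => (2*γ + ε^2*A) / (2*γ*A + ε^2*A^2 + lam^2*q^2))
      (nhdsWithin 0 (Set.Ioi 0)) (nhds (1 / (z + q^2/2 * (2*κ + lam^2/γ)))) := by
    rw [← hval]
    apply Filter.Tendsto.mono_left _ nhdsWithin_le_nhds
    exact (ContinuousAt.div (by fun_prop) (by fun_prop) (by simpa using hD0.ne'))
  refine hcont.congr' ?_
  filter_upwards [self_mem_nhdsWithin] with ε (hε : 0 < ε)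
  have hε2 : (ε^2 : ℝ) ≠ 0 := by positivity
  have hden : (ε^2*z + κ*(ε*q)^2 + γ)^2 + lam^2*(ε*q)^2 - γ^2
      = ε^2 * (2*γ*A + ε^2*A^2 + lam^2*q^2) := by rw [hA]; ring
  have hnum : (2*γ + ε^2*z + κ*(ε*q)^2) = 2*γ + ε^2*A := by rw [hA]; ring
  rw [hden, hnum, ← mul_div_assoc, ← mul_div_mul_left (2*γ + ε^2*A) (2*γ*A + ε^2*A^2 + lam^2*q^2) hε2]
end
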